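/- arXiv:2412.17526 — 6 statements merged into one kernel-verified Lean document; each statement's English description precedes it below -/
import Mathlib

section
/- The matrix R with entries r_{i,N} = 1/(∑_ℓ w_ℓ) for all i, r_{i,j} = w_{j+1}/((∑_{ℓ=1}^j w_ℓ)(∑_{ℓ=1}^{j+1} w_ℓ)) for i ≤ j < N, r_{i+1,i} = -1/(∑_{ℓ=1}^{i+1} w_ℓ) for i = 1,...,N-1, and r_{i,j} = 0 for i ≥ j+2, is a right inverse of Q: QR = Id. -/
/-- The explicit matrix `R` built from partial sums of the weights is a right
inverse of `Q`: `Q * R = 1`. -/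
theorem stmt_2 (n : ℕ) (w : ℕ → ℝ) (hw : ∀ i ≤ n, 0 < w i)
    (Q R : Matrix (Fin (n + 1)) (Fin (n + 1)) ℝ)
    (hQ : ∀ i j : Fin (n + 1),
      Q i j = if (j : ℕ) ≤ (i : ℕ) then w j
        else if (j : ℕ) = (i : ℕ) + 1 then -(∑ k ∈ Finset.range ((i : ℕ) + 1), w k)
        else 0)
    (hR : ∀ i j : Fin (n + 1),
      R i j = if (j : ℕ) = n then 1 / (∑ k ∈ Finset.range (n + 1), w k)
        else if (i : ℕ) ≤ (j : ℕ) then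
          w ((j : ℕ) + 1) /
            ((∑ k ∈ Finset.range ((j : ℕ) + 1), w k) * (∑ k ∈ Finset.range ((j : ℕ) + 2), w k))
        else if (i : ℕ) = (j : ℕ) + 1 then -1 / (∑ k ∈ Finset.range ((j : ℕ) + 2), w k)
        else 0) :
    Q * R = 1 := by
  have hSpos : ∀ m, 0 < m → m ≤ n + 1 → 0 < ∑ k ∈ Finset.range m, w k := by
    intro m hm hmn
    apply Finset.sum_pos
    · intro k hk
      exact hw k (by have := Finset.mem_range.mp hk; omega)
    · exact ⟨0, Finset.mem_range.mpr hm⟩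
  ext i j
  rw [Matrix.mul_apply, Matrix.one_apply]
  set I := (i : ℕ) with hIdef
  set J := (j : ℕ) with hJdef
  have hIle : I ≤ n := Nat.lt_succ_iff.mp i.isLt
  have hJle : J ≤ n := Nat.lt_succ_iff.mp j.isLt
  have hij : (if i = j then (1:ℝ) else 0) = (if I = J then 1 else 0) := by
    simp [Fin.ext_iff, hIdef, hJdef]
  have hsum : (∑ k : Fin (n+1), Q i k * R k j) =
      ∑ m ∈ Finset.range (n+1),
        ((if m ≤ I then w m else if m = I + 1 then -∑ k ∈ Finset.range (I+1), w k else 0) *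
         (if J = n then 1 / ∑ k ∈ Finset.range (n+1), w k
          else if m ≤ J then
            w (J+1) / ((∑ k ∈ Finset.range (J+1), w k) * ∑ k ∈ Finset.range (J+2), w k)
          else if m = J + 1 then -1 / ∑ k ∈ Finset.range (J+2), w k else 0)) := by
    rw [← Fin.sum_univ_eq_sum_range]
    refine Finset.sum_congr rfl fun k _ => ?_
    rw [hQ, hR]
  rw [hsum, hij]
  by_cases hJn : J = n
  · simp only [if_pos hJn]
    rw [← Finset.sum_mul]
    by_cases hIn : I = n
    · have h1 : (∑ m ∈ Finset.range (n+1),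
          (if m ≤ I then w m else if m = I + 1 then -∑ k ∈ Finset.range (I+1), w k else 0))
          = ∑ k ∈ Finset.range (n+1), w k :=
        Finset.sum_congr rfl fun m hm => if_pos (by have := Finset.mem_range.mp hm; omega)
      rw [h1, if_pos (by omega : I = J)]
      have := hSpos (n+1) (by omega) (by omega)
      field_simp
    · have hI2 : I + 2 ≤ n + 1 := by omega
      rw [← Finset.sum_range_add_sum_Ico _ hI2]
      have htail : (∑ m ∈ Finset.Ico (I+2) (n+1),
          (if m ≤ I then w m else if m = I + 1 then -∑ k ∈ Finset.range (I+1), w k else 0)) = 0 := by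
        apply Finset.sum_eq_zero
        intro m hm
        have := Finset.mem_Ico.mp hm
        rw [if_neg (show ¬ m ≤ I by omega), if_neg (show ¬ m = I + 1 by omega)]
      rw [htail, Finset.sum_range_succ]
      have hhead : (∑ m ∈ Finset.range (I+1),
          (if m ≤ I then w m else if m = I + 1 then -∑ k ∈ Finset.range (I+1), w k else 0))
          = ∑ k ∈ Finset.range (I+1), w k :=
        Finset.sum_congr rfl fun m hm => if_pos (by have := Finset.mem_range.mp hm; omega)
      rw [hhead, if_neg (by omega), if_pos rfl, if_neg (by omega)]
      ring
  · simp only [if_neg hJn]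
    have hJlt : J < n := by omega
    have hne1 : (∑ k ∈ Finset.range (J+1), w k) ≠ 0 := (hSpos (J+1) (by omega) (by omega)).ne'
    have hne2 : (∑ k ∈ Finset.range (J+2), w k) ≠ 0 := (hSpos (J+2) (by omega) (by omega)).ne'
    have hstep : (∑ k ∈ Finset.range (J+2), w k) = (∑ k ∈ Finset.range (J+1), w k) + w (J+1) :=
      Finset.sum_range_succ w (J+1)
    by_cases hIJ : I ≤ J
    · have hI2 : I + 2 ≤ n + 1 := by omega
      rw [← Finset.sum_range_add_sum_Ico (fun m =>
        ((if m ≤ I then w m else if m = I + 1 then -∑ k ∈ Finset.range (I+1), w k else 0) *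
         (if m ≤ J then
            w (J+1) / ((∑ k ∈ Finset.range (J+1), w k) * ∑ k ∈ Finset.range (J+2), w k)
          else if m = J + 1 then -1 / ∑ k ∈ Finset.range (J+2), w k else 0))) hI2]
      have htail : (∑ m ∈ Finset.Ico (I+2) (n+1),
          ((if m ≤ I then w m else if m = I + 1 then -∑ k ∈ Finset.range (I+1), w k else 0) *
           (if m ≤ J then
              w (J+1) / ((∑ k ∈ Finset.range (J+1), w k) * ∑ k ∈ Finset.range (J+2), w k)
            else if m = J + 1 then -1 / ∑ k ∈ Finset.range (J+2), w k else 0))) = 0 := by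
        apply Finset.sum_eq_zero
        intro m hm
        have := Finset.mem_Ico.mp hm
        rw [if_neg (show ¬ m ≤ I by omega), if_neg (show ¬ m = I + 1 by omega), zero_mul]
      rw [htail, Finset.sum_range_succ]
      have hhead : (∑ m ∈ Finset.range (I+1),
          ((if m ≤ I then w m else if m = I + 1 then -∑ k ∈ Finset.range (I+1), w k else 0) *
           (if m ≤ J then
              w (J+1) / ((∑ k ∈ Finset.range (J+1), w k) * ∑ k ∈ Finset.range (J+2), w k)
            else if m = J + 1 then -1 / ∑ k ∈ Finset.range (J+2), w k else 0)))
          = (∑ k ∈ Finset.range (I+1), w k) *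
            (w (J+1) / ((∑ k ∈ Finset.range (J+1), w k) * ∑ k ∈ Finset.range (J+2), w k)) := by
        refine Eq.trans (Finset.sum_congr rfl fun m hm => ?_)
          (Finset.sum_mul _ _ _).symm
        have := Finset.mem_range.mp hm
        rw [if_pos (show m ≤ I by omega), if_pos (show m ≤ J by omega)]
      rw [hhead, if_neg (show ¬ I + 1 ≤ I by omega), if_pos rfl]
      rcases eq_or_lt_of_le hIJ with hEq | hLt
      · rw [hEq, if_neg (show ¬ J + 1 ≤ J by omega), if_pos rfl, if_pos rfl]
        field_simp
        rw [hstep]; ring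
      · rw [if_pos (show I + 1 ≤ J by omega), if_neg (show ¬ I = J by omega)]
        ring
    · have hJ2 : J + 2 ≤ n + 1 := by omega
      rw [← Finset.sum_range_add_sum_Ico (fun m =>
        ((if m ≤ I then w m else if m = I + 1 then -∑ k ∈ Finset.range (I+1), w k else 0) *
         (if m ≤ J then
            w (J+1) / ((∑ k ∈ Finset.range (J+1), w k) * ∑ k ∈ Finset.range (J+2), w k)
          else if m = J + 1 then -1 / ∑ k ∈ Finset.range (J+2), w k else 0))) hJ2]
      have htail : (∑ m ∈ Finset.Ico (J+2) (n+1),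
          ((if m ≤ I then w m else if m = I + 1 then -∑ k ∈ Finset.range (I+1), w k else 0) *
           (if m ≤ J then
              w (J+1) / ((∑ k ∈ Finset.range (J+1), w k) * ∑ k ∈ Finset.range (J+2), w k)
            else if m = J + 1 then -1 / ∑ k ∈ Finset.range (J+2), w k else 0))) = 0 := by
        apply Finset.sum_eq_zero
        intro m hm
        have := Finset.mem_Ico.mp hm
        rw [if_neg (show ¬ m ≤ J by omega), if_neg (show ¬ m = J + 1 by omega), mul_zero]
      rw [htail, Finset.sum_range_succ]
      have hhead : (∑ m ∈ Finset.range (J+1),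
          ((if m ≤ I then w m else if m = I + 1 then -∑ k ∈ Finset.range (I+1), w k else 0) *
           (if m ≤ J then
              w (J+1) / ((∑ k ∈ Finset.range (J+1), w k) * ∑ k ∈ Finset.range (J+2), w k)
            else if m = J + 1 then -1 / ∑ k ∈ Finset.range (J+2), w k else 0)))
          = (∑ k ∈ Finset.range (J+1), w k) *
            (w (J+1) / ((∑ k ∈ Finset.range (J+1), w k) * ∑ k ∈ Finset.range (J+2), w k)) := by
        refine Eq.trans (Finset.sum_congr rfl fun m hm => ?_)
          (Finset.sum_mul _ _ _).symm
        have := Finset.mem_range.mp hm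
        rw [if_pos (show m ≤ I by omega), if_pos (show m ≤ J by omega)]
      rw [hhead, if_pos (show J + 1 ≤ I by omega), if_neg (show ¬ J + 1 ≤ J by omega),
        if_pos rfl, if_neg (show ¬ I = J by omega)]
      field_simp
      ring
end

section
/- The matrix Q defined by q_{i,j} = w_j for j ≤ i, q_{i,i+1} = -∑_{j=1}^i w_j for i < N, zeros elsewhere, is invertible. -/
/-- The explicit bidiagonal matrix `Q` is invertible. -/
theorem stmt_3 (n : ℕ) (w : ℕ → ℝ) (hw : ∀ i ≤ n, 0 < w i)
    (Q : Matrix (Fin (n + 1)) (Fin (n + 1)) ℝ)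
    (hQ : ∀ i j : Fin (n + 1),
      Q i j = if (j : ℕ) ≤ (i : ℕ) then w j
        else if (j : ℕ) = (i : ℕ) + 1 then -(∑ k ∈ Finset.range ((i : ℕ) + 1), w k)
        else 0) :
    IsUnit Q := by
  set S : ℕ → ℝ := fun i => ∑ k ∈ Finset.range (i + 1), w k with hS
  set L : Matrix (Fin (n + 1)) (Fin (n + 1)) ℝ :=
    fun i j => if i = j then 1 else if (i : ℕ) = (j : ℕ) + 1 then -1 else 0 with hL
  set U : Matrix (Fin (n + 1)) (Fin (n + 1)) ℝ :=
    fun i j => if (j : ℕ) = (i : ℕ) then S i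
      else if (j : ℕ) = (i : ℕ) + 1 then -(S i) else 0 with hU
  have hSpos : ∀ i : Fin (n + 1), 0 < S (i : ℕ) := by
    intro i
    apply Finset.sum_pos
    · intro k hk
      have hk' : k < (i : ℕ) + 1 := Finset.mem_range.mp hk
      have hi : (i : ℕ) ≤ n := Nat.lt_succ_iff.mp i.isLt
      exact hw k (by omega)
    · exact ⟨0, Finset.mem_range.mpr (Nat.succ_pos _)⟩
  have hLQ : L * Q = U := by
    ext i j
    rw [Matrix.mul_apply]
    rcases Nat.eq_zero_or_eq_succ_pred (i : ℕ) with h0 | hsucc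
    · -- i = 0
      have hi0 : i = 0 := Fin.ext h0
      subst hi0
      rw [Finset.sum_eq_single (0 : Fin (n + 1))]
      · have h00 : L 0 0 = 1 := by simp [hL]
        rw [h00, one_mul, hQ, hU]
        simp only [Fin.val_zero, hS, Nat.le_zero, Finset.sum_range_one, Nat.zero_add]
        split_ifs with h1 h2 <;> simp_all
      · intro k _ hk
        have : ¬ ((0 : Fin (n+1)) = k) := fun h => hk h.symm
        simp [hL, this, (Fin.val_ne_of_ne hk).symm]
      · intro h; exact absurd (Finset.mem_univ _) h
    · -- i = m+1
      set m := (i : ℕ) - 1 with hm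
      have him : (i : ℕ) = m + 1 := hsucc
      have hmlt : m < n + 1 := by omega
      set i' : Fin (n + 1) := ⟨m, hmlt⟩ with hi'
      have hne : i' ≠ i := by
        intro h
        have := congrArg Fin.val h
        simp [hi', him] at this
      have hsum : ∀ k : Fin (n+1), k ∉ ({i', i} : Finset (Fin (n+1))) → L i k * Q k j = 0 := by
        intro k hk
        simp only [Finset.mem_insert, Finset.mem_singleton] at hk
        push_neg at hk
        have h1 : i ≠ k := fun h => hk.2 h.symm
        have h2 : (i : ℕ) ≠ (k : ℕ) + 1 := by
          intro h
          apply hk.1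
          apply Fin.ext
          simp [hi', hm]
          omega
        simp [hL, h1, h2]
      calc ∑ k, L i k * Q k j = ∑ k ∈ ({i', i} : Finset (Fin (n+1))), L i k * Q k j := by
            exact (Finset.sum_subset (Finset.subset_univ _)
              (fun k _ hk => hsum k hk)).symm
        _ = L i i' * Q i' j + L i i * Q i j := Finset.sum_pair hne
        _ = U i j := by
            have hii' : i ≠ i' := fun h => hne h.symm
            have hval : (i : ℕ) = (i' : ℕ) + 1 := by simp [hi', him]
            simp only [hL, if_pos rfl, if_neg hii', if_pos hval, one_mul, neg_one_mul]
            have hvi' : ((i' : Fin (n+1)) : ℕ) = m := rfl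
            rw [hQ, hQ, hU]
            simp only [hvi']
            rcases lt_trichotomy ((j : ℕ)) ((i : ℕ)) with hj | hj | hj
            · -- j ≤ i - 1 : both w j, cancel; U = 0
              have c1 : (j : ℕ) ≤ m := by omega
              have c3 : (j : ℕ) ≤ (i : ℕ) := by omega
              have c5 : ¬ ((j : ℕ) = (i : ℕ)) := by omega
              have c6 : ¬ ((j : ℕ) = (i : ℕ) + 1) := by omega
              simp only [if_pos c1, if_pos c3, if_neg c5, if_neg c6]
              ring
            · -- j = i
              have c1 : ¬ ((j : ℕ) ≤ m) := by omega
              have c2 : (j : ℕ) = m + 1 := by omega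
              have c3 : (j : ℕ) ≤ (i : ℕ) := by omega
              have c5 : (j : ℕ) = (i : ℕ) := by omega
              simp only [if_neg c1, if_pos c2, if_pos c3, if_pos c5, hS]
              rw [c5, him, Finset.sum_range_succ w (m + 1)]
              ring
            · rcases Nat.eq_or_lt_of_le (Nat.succ_le_of_lt hj) with hj2 | hj2
              · -- j = i + 1
                have c1 : ¬ ((j : ℕ) ≤ m) := by omega
                have c2 : ¬ ((j : ℕ) = m + 1) := by omega
                have c3 : ¬ ((j : ℕ) ≤ (i : ℕ)) := by omega
                have c4 : (j : ℕ) = (i : ℕ) + 1 := by omega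
                have c5 : ¬ ((j : ℕ) = (i : ℕ)) := by omega
                simp only [if_neg c1, if_neg c2, if_neg c3, if_pos c4, if_neg c5, hS]
                ring
              · -- j > i + 1
                have c1 : ¬ ((j : ℕ) ≤ m) := by omega
                have c2 : ¬ ((j : ℕ) = m + 1) := by omega
                have c3 : ¬ ((j : ℕ) ≤ (i : ℕ)) := by omega
                have c4 : ¬ ((j : ℕ) = (i : ℕ) + 1) := by omega
                have c5 : ¬ ((j : ℕ) = (i : ℕ)) := by omega
                simp only [if_neg c1, if_neg c2, if_neg c3, if_neg c4, if_neg c5]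
                ring
  have hdetL : L.det = 1 := by
    rw [Matrix.det_of_lowerTriangular L]
    · simp [hL]
    · intro i j hij
      have : i ≠ j := by
        intro h; subst h; exact lt_irrefl _ hij
      have h2 : (i : ℕ) ≠ (j : ℕ) + 1 := by
        have : (i : ℕ) < (j : ℕ) := hij
        omega
      simp [hL, this, h2]
  have hdetU : U.det = ∏ i : Fin (n+1), S i := by
    rw [Matrix.det_of_upperTriangular]
    · apply Finset.prod_congr rfl
      intro i _
      simp [hU]
    · intro i j hij
      have h1 : (j : ℕ) ≠ (i : ℕ) := by
        have : (j : ℕ) < (i : ℕ) := hij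
        omega
      have h2 : (j : ℕ) ≠ (i : ℕ) + 1 := by
        have : (j : ℕ) < (i : ℕ) := hij
        omega
      simp [hU, h1, h2]
  have hdetQ : Q.det ≠ 0 := by
    have h1 : L.det * Q.det = U.det := by rw [← Matrix.det_mul, hLQ]
    rw [hdetL, one_mul, hdetU] at h1
    rw [h1]
    exact ne_of_gt (Finset.prod_pos fun i _ => hSpos i)
  rw [Matrix.isUnit_iff_isUnit_det]
  exact isUnit_iff_ne_zero.mpr hdetQ
end

section
/- For the explicit matrix Q (with entries q_{i,j} = w_j for j ≤ i, q_{i,i+1} = -∑_{j=1}^i w_j, zeros elsewhere) and any nondecreasing positive vector x (0 < x_1 ≤ x_2 ≤ ... ≤ x_N), all off-diagonal entries of the matrix T = Q·diag(x)·Q^{-1} are nonpositive. -/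
/-!
Write `S m = w 0 + ⋯ + w m` and `u m = 𝟙_{[0, m]} / S m` (with `u (n + 1) = 0`). The columns of
`Q⁻¹` are `u j - u (j + 1)`, and entry `i` of `Q (x ⊙ u m)` is the weighted mean
`(w 0 x 0 + ⋯ + w m x m) / S m` when `m ≤ i`, and `(∑_{k ≤ i} w k (x k - x (i + 1))) / S m`
when `i < m`. Below the diagonal the entry of `T` is therefore the difference of two consecutive
weighted means of the nondecreasing `x`, which is `≤ 0`; above it, it is a nonpositive sum times
`1 / S j - 1 / S (j + 1) ≥ 0`.
-/

open Finset Matrix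

noncomputable section

variable (n : ℕ) (w : ℕ → ℝ)

def weightSum (m : ℕ) : ℝ := ∑ k ∈ range (m + 1), w k

def weightedMean (y : ℕ → ℝ) (m : ℕ) : ℝ := (∑ k ∈ range (m + 1), w k * y k) / weightSum w m

def weightMatrix : Matrix (Fin (n + 1)) (Fin (n + 1)) ℝ :=
  of fun i j => if (j : ℕ) ≤ i then w j else if (j : ℕ) = i + 1 then -weightSum w i else 0

/-- The cutoff at `n` makes `segmentVec n w (n + 1) = 0`, so that the last column of
`weightMatrixInv n w` is `segmentVec n w n`. -/
def weightSumInv (m : ℕ) : ℝ := if m ≤ n then (weightSum w m)⁻¹ else 0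

def segmentVec (m k : ℕ) : ℝ := if k ≤ m then weightSumInv n w m else 0

def weightMatrixInv : Matrix (Fin (n + 1)) (Fin (n + 1)) ℝ :=
  of fun k j => segmentVec n w j k - segmentVec n w (j + 1) k

variable {n w}

-- `hf` lets the last row, which has no entry right of the diagonal, follow the general pattern.
theorem weightMatrix_mulVec_apply (f : ℕ → ℝ) (hf : f (n + 1) = 0) (i : Fin (n + 1)) :
    (weightMatrix n w *ᵥ fun k => f k) i = ∑ k ∈ range (i + 1), w k * (f k - f (i + 1)) := by
  let g : ℕ → ℝ := fun k =>
    if k ≤ i then w k * f k else if k = i + 1 then -weightSum w i * f k else 0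
  have hg : ∀ k : Fin (n + 1), weightMatrix n w i k * f k = g k := fun k => by
    simp only [weightMatrix, of_apply, g]; split_ifs <;> ring
  have hfilter : (range (n + 2)).filter (· ≤ (i : ℕ)) = range (i + 1) := by
    ext k; simp only [mem_filter, mem_range]; omega
  calc (weightMatrix n w *ᵥ fun k => f k) i
      = ∑ k ∈ range (n + 2), g k := by
        have hlast : g (n + 1) = 0 := by
          have hi := i.isLt
          show (if n + 1 ≤ (i : ℕ) then _ else _) = _
          rw [if_neg (by omega), hf, mul_zero]; split_ifs <;> rfl
        rw [sum_range_succ, hlast, add_zero, mulVec, dotProduct, Fintype.sum_congr _ _ hg,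
          Fin.sum_univ_eq_sum_range g]
    _ = ∑ k ∈ range (n + 2), ((if k ≤ i then w k * f k else 0) +
          if i + 1 = k then -weightSum w i * f (i + 1) else 0) := by
        refine sum_congr rfl fun k _ => ?_
        simp only [g]; split_ifs <;> first | omega | (subst_vars; ring)
    _ = ∑ k ∈ range (i + 1), w k * (f k - f (i + 1)) := by
        rw [sum_add_distrib, ← sum_filter, hfilter, sum_ite_eq, if_pos (by simp; omega)]
        simp only [weightSum, mul_sub, sum_sub_distrib, ← sum_mul]
        ring

theorem weightMatrix_mulVec_mul_segmentVec (y : ℕ → ℝ) (m : ℕ) (i : Fin (n + 1)) :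
    (weightMatrix n w *ᵥ fun k => y k * segmentVec n w m k) i =
      (if m ≤ i then ∑ k ∈ range (m + 1), w k * y k
        else ∑ k ∈ range (i + 1), w k * (y k - y (i + 1))) * weightSumInv n w m := by
  have hlast : y (n + 1) * segmentVec n w m (n + 1) = 0 := by
    simp only [segmentVec, weightSumInv]; split_ifs <;> first | omega | simp
  rw [weightMatrix_mulVec_apply (fun k => y k * segmentVec n w m k) hlast]
  split_ifs with hm
  · have hfilter : (range (i + 1)).filter (· ≤ m) = range (m + 1) := by
      ext k; simp only [mem_filter, mem_range]; omega
    rw [sum_mul, ← hfilter, sum_filter]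
    refine sum_congr rfl fun k _ => ?_
    simp only [segmentVec, if_neg (show ¬(i : ℕ) + 1 ≤ m by omega)]
    split_ifs <;> ring
  · rw [sum_mul]
    refine sum_congr rfl fun k hk => ?_
    have hk := mem_range.mp hk
    simp only [segmentVec, if_pos (show k ≤ m by omega), if_pos (show (i : ℕ) + 1 ≤ m by omega)]
    ring

theorem weightSum_pos {m : ℕ} (hw : ∀ k ≤ m, 0 < w k) : 0 < weightSum w m :=
  sum_pos (fun k hk => hw k (Nat.lt_succ_iff.mp (mem_range.mp hk))) ⟨0, by simp⟩

theorem weightSumInv_of_le {m : ℕ} (hm : m ≤ n) : weightSumInv n w m = (weightSum w m)⁻¹ :=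
  if_pos hm

theorem weightSumInv_succ_le (hw : ∀ k ≤ n, 0 < w k) (m : ℕ) :
    weightSumInv n w (m + 1) ≤ weightSumInv n w m := by
  rcases lt_trichotomy m n with hm | rfl | hm
  · rw [weightSumInv_of_le hm.le, weightSumInv_of_le hm]
    refine inv_anti₀ (weightSum_pos fun k hk => hw k (by omega)) ?_
    rw [weightSum, weightSum, sum_range_succ _ (m + 1)]
    exact le_add_of_nonneg_right (hw _ hm).le
  · rw [weightSumInv_of_le le_rfl, weightSumInv, if_neg (by omega)]
    exact (inv_pos.mpr (weightSum_pos hw)).le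
  · simp only [weightSumInv, if_neg (show ¬m + 1 ≤ n by omega), if_neg (show ¬m ≤ n by omega),
      le_refl]

theorem weightMatrix_mulVec_segmentVec (hw : ∀ k ≤ n, 0 < w k) (m : ℕ) (i : Fin (n + 1)) :
    (weightMatrix n w *ᵥ fun k => segmentVec n w m k) i = if m ≤ i then 1 else 0 := by
  have h := weightMatrix_mulVec_mul_segmentVec (w := w) (fun _ => 1) m i
  simp only [one_mul, mul_one, sub_self, mul_zero, sum_const_zero] at h
  rw [h]
  split_ifs with hm
  · have hmn : m ≤ n := hm.trans (Fin.is_le i)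
    rw [weightSumInv_of_le hmn]
    exact mul_inv_cancel₀ (weightSum_pos fun k hk => hw k (hk.trans hmn)).ne'
  · exact zero_mul _

theorem weightMatrix_mul_weightMatrixInv (hw : ∀ k ≤ n, 0 < w k) :
    weightMatrix n w * weightMatrixInv n w = 1 := by
  ext i j
  have hcol (m : ℕ) := weightMatrix_mulVec_segmentVec hw m i
  simp only [mulVec, dotProduct] at hcol
  simp only [mul_apply, weightMatrixInv, of_apply, mul_sub, sum_sub_distrib, hcol, one_apply,
    Fin.ext_iff]
  split_ifs <;> first | omega | norm_num

theorem sum_mul_sub_succ_nonpos {y : ℕ → ℝ} (hy : Monotone y) {m : ℕ} (hw : ∀ k ≤ m, 0 ≤ w k) :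
    ∑ k ∈ range (m + 1), w k * (y k - y (m + 1)) ≤ 0 :=
  sum_nonpos fun k hk => mul_nonpos_of_nonneg_of_nonpos (hw k (by simp at hk; omega))
    (sub_nonpos.mpr (hy (by simp at hk; omega)))

theorem weightedMean_le_succ {y : ℕ → ℝ} (hy : Monotone y) {m : ℕ} (hw : ∀ k ≤ m + 1, 0 < w k) :
    weightedMean w y m ≤ weightedMean w y (m + 1) := by
  have hS := weightSum_pos fun k (hk : k ≤ m) => hw k (by omega)
  have hS' := weightSum_pos hw
  have hgap : ∑ k ∈ range (m + 1), w k * y k - weightSum w m * y (m + 1) ≤ 0 := by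
    have := sum_mul_sub_succ_nonpos hy fun k (hk : k ≤ m) => (hw k (by omega)).le
    rwa [weightSum, sum_mul, ← sum_sub_distrib, ← sum_congr rfl fun k _ => mul_sub (w k) _ _]
  have hS_succ : weightSum w (m + 1) = weightSum w m + w (m + 1) := sum_range_succ w (m + 1)
  rw [weightedMean, weightedMean, div_le_div_iff₀ hS hS', hS_succ,
    sum_range_succ (fun k => w k * y k) (m + 1)]
  nlinarith [mul_le_mul_of_nonneg_left hgap (hw (m + 1) le_rfl).le]

theorem weightMatrix_conj_diagonal_apply (y : ℕ → ℝ) (i j : Fin (n + 1)) :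
    (weightMatrix n w * diagonal (fun k : Fin (n + 1) => y k) * weightMatrixInv n w) i j =
      (weightMatrix n w *ᵥ fun k => y k * segmentVec n w j k) i -
        (weightMatrix n w *ᵥ fun k => y k * segmentVec n w (j + 1) k) i := by
  rw [mul_apply]
  simp only [mul_diagonal, weightMatrixInv, of_apply, mul_sub, sum_sub_distrib, mul_assoc]
  rfl

theorem weightMatrix_conj_diagonal_apply_of_lt (y : ℕ → ℝ) {i j : Fin (n + 1)} (hij : i < j) :
    (weightMatrix n w * diagonal (fun k : Fin (n + 1) => y k) * weightMatrixInv n w) i j =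
      (∑ k ∈ range (i + 1), w k * (y k - y (i + 1))) *
        (weightSumInv n w j - weightSumInv n w (j + 1)) := by
  rw [weightMatrix_conj_diagonal_apply, weightMatrix_mulVec_mul_segmentVec,
    weightMatrix_mulVec_mul_segmentVec,if_neg (by omega), if_neg (by omega), mul_sub]

theorem weightMatrix_conj_diagonal_apply_of_gt (y : ℕ → ℝ) {i j : Fin (n + 1)} (hji : j < i) :
    (weightMatrix n w * diagonal (fun k : Fin (n + 1) => y k) * weightMatrixInv n w) i j =
      weightedMean w y j - weightedMean w y (j + 1) := by
  rw [weightMatrix_conj_diagonal_apply, weightMatrix_mulVec_mul_segmentVec,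
    weightMatrix_mulVec_mul_segmentVec,if_pos (by omega), if_pos (by omega),
    weightSumInv_of_le (by omega), weightSumInv_of_le (by omega), weightedMean, weightedMean,
    div_eq_mul_inv, div_eq_mul_inv]

end

theorem stmt_4_general (n : ℕ) (w : ℕ → ℝ) (hw : ∀ i ≤ n, 0 < w i)
    (x : Fin (n + 1) → ℝ) (hxmono : Monotone x)
    (Q : Matrix (Fin (n + 1)) (Fin (n + 1)) ℝ)
    (hQ : ∀ i j : Fin (n + 1),
      Q i j = if (j : ℕ) ≤ (i : ℕ) then w j
        else if (j : ℕ) = (i : ℕ) + 1 then -(∑ k ∈ Finset.range ((i : ℕ) + 1), w k)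
        else 0) :
    ∀ i j : Fin (n + 1), i ≠ j → (Q * Matrix.diagonal x * Q⁻¹) i j ≤ 0 := by
  have hQw : Q = weightMatrix n w := by
    ext i j
    rw [hQ]
    rfl
  let y : ℕ → ℝ := fun k => x ⟨min k n, by omega⟩
  have hy : Monotone y := fun a b hab => hxmono (Fin.mk_le_mk.mpr (min_le_min_right n hab))
  have hxy : x = fun k : Fin (n + 1) => y k :=
    funext fun k => congrArg x (Fin.ext (min_eq_left (Fin.is_le k)).symm)
  rw [hQw, inv_eq_right_inv (weightMatrix_mul_weightMatrixInv hw), hxy]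
  intro i j hij
  rcases hij.lt_or_gt with hij | hji
  · rw [weightMatrix_conj_diagonal_apply_of_lt y hij]
    exact mul_nonpos_of_nonpos_of_nonneg
      (sum_mul_sub_succ_nonpos hy fun k hk => (hw k (hk.trans (Fin.is_le i))).le)
      (sub_nonneg.mpr (weightSumInv_succ_le hw j))
  · rw [weightMatrix_conj_diagonal_apply_of_gt y hji]
    exact sub_nonpos.mpr (weightedMean_le_succ hy fun k hk => hw k (by omega))

/-- For the explicit matrix `Q` and nondecreasing positive nodes `x`, all
off-diagonal entries of `T = Q diag(x) Q⁻¹` are nonpositive. -/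
theorem stmt_4 (n : ℕ) (w : ℕ → ℝ) (hw : ∀ i ≤ n, 0 < w i)
    (x : Fin (n + 1) → ℝ) (hx0 : ∀ i, 0 < x i) (hxmono : Monotone x)
    (Q : Matrix (Fin (n + 1)) (Fin (n + 1)) ℝ)
    (hQ : ∀ i j : Fin (n + 1),
      Q i j = if (j : ℕ) ≤ (i : ℕ) then w j
        else if (j : ℕ) = (i : ℕ) + 1 then -(∑ k ∈ Finset.range ((i : ℕ) + 1), w k)
        else 0) :
    ∀ i j : Fin (n + 1), i ≠ j → (Q * Matrix.diagonal x * Q⁻¹) i j ≤ 0 :=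
  stmt_4_general n w hw x hxmono Q hQ
end

section
/- If Q is an admissible matrix (invertible, e_N^T Q = w^T, Q𝟙 = (∑w_i)e_N, and Q·diag(x)·Q^{-1} has nonpositive off-diagonal entries) and y_0 = μ·diag(x)^{-1}·𝟙 for some μ ≥ 0, then Q·y_0 has all nonnegative entries, i.e., y_0 ∈ Q^{-1}ℝ_+^N. -/
open Matrix Finset Filter Topology

/-- If `Q` is admissible and `y₀ = μ diag(x)⁻¹ 𝟙` with `μ ≥ 0`, then
`Q y₀ ∈ ℝ₊^N`, i.e. `y₀ ∈ Q⁻¹ ℝ₊^N`. -/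
theorem stmt_5 (n : ℕ) (w x : Fin (n + 1) → ℝ)
    (hw : ∀ i, 0 < w i) (hx0 : ∀ i, 0 < x i) (hxmono : Monotone x)
    (Q : Matrix (Fin (n + 1)) (Fin (n + 1)) ℝ)
    (hQinv : IsUnit Q)
    (hrow : ∀ j, Q (Fin.last n) j = w j)
    (hcol : Q.mulVec (fun _ => (1 : ℝ)) = Pi.single (Fin.last n) (∑ i, w i))
    (hoff : ∀ i j : Fin (n + 1), i ≠ j → (Q * Matrix.diagonal x * Q⁻¹) i j ≤ 0)
    (μ : ℝ) (hμ : 0 ≤ μ)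
    (y₀ : Fin (n + 1) → ℝ) (hy₀ : y₀ = fun i => μ * (x i)⁻¹) :
    ∀ i, 0 ≤ Q.mulVec y₀ i := by
  classical
  intro i
  have hdet : IsUnit Q.det := (Matrix.isUnit_iff_isUnit_det Q).mp hQinv
  have hQQ : Q * Q⁻¹ = 1 := Matrix.mul_nonsing_inv Q hdet
  have hQ'Q : Q⁻¹ * Q = 1 := Matrix.nonsing_inv_mul Q hdet
  set A : Matrix (Fin (n+1)) (Fin (n+1)) ℝ := Q * Matrix.diagonal x * Q⁻¹ with hA
  set D : ℝ := x (Fin.last n) + ∑ k, |A k k| with hD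
  have hD0 : 0 < D :=
    add_pos_of_pos_of_nonneg (hx0 _) (Finset.sum_nonneg fun k _ => abs_nonneg _)
  set t : ℝ := (2*D)⁻¹ with ht
  have ht0 : 0 < t := by positivity
  have htD : t * D = 1/2 := by
    rw [ht, inv_mul_eq_div, div_eq_div_iff (by positivity) (by norm_num : (2:ℝ) ≠ 0)]
    ring
  have htx : ∀ j, t * x j ≤ 1/2 := by
    intro j
    have h1 : x j ≤ D := by
      have := hxmono (Fin.le_last j)
      have h2 : (0:ℝ) ≤ ∑ k, |A k k| := Finset.sum_nonneg fun k _ => abs_nonneg _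
      linarith
    have h3 : t * x j ≤ t * D := mul_le_mul_of_nonneg_left h1 ht0.le
    exact h3.trans_eq htD
  have htA : ∀ j, t * A j j ≤ 1/2 := by
    intro j
    have h1 : A j j ≤ D := by
      have h2 : |A j j| ≤ ∑ k, |A k k| :=
        Finset.single_le_sum (fun k _ => abs_nonneg (A k k)) (Finset.mem_univ j)
      have := le_abs_self (A j j)
      have := (hx0 (Fin.last n))
      linarith
    have h3 : t * A j j ≤ t * D := mul_le_mul_of_nonneg_left h1 ht0.le
    exact h3.trans_eq htD
  set r : Fin (n+1) → ℝ := fun j => 1 - t * x j with hr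
  have hr0 : ∀ j, 0 ≤ r j := fun j => by have := htx j; simp [hr]; linarith
  have hr1 : ∀ j, r j < 1 := fun j => by
    have := mul_pos ht0 (hx0 j); simp [hr]; linarith
  set C : Matrix (Fin (n+1)) (Fin (n+1)) ℝ := Q * Matrix.diagonal r * Q⁻¹ with hC
  have hdiagr : Matrix.diagonal r = 1 - t • Matrix.diagonal x := by
    ext a b
    by_cases h : a = b <;> simp [Matrix.diagonal, h, hr, Matrix.one_apply]
  have hCA : C = 1 - t • A := by
    rw [hC, hdiagr, hA]
    rw [Matrix.mul_sub, Matrix.sub_mul, mul_one, hQQ, Matrix.mul_smul, Matrix.smul_mul]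
  have hC0 : ∀ a b, 0 ≤ C a b := by
    intro a b
    rw [hCA]
    by_cases h : a = b
    · subst h
      have h2 := htA a
      have h3 : (1 - t • A) a a = 1 - t * A a a := by
        simp [Matrix.sub_apply, Matrix.smul_apply, Matrix.one_apply]
      rw [h3]
      linarith
    · have := hoff a b h
      have : t * A a b ≤ 0 := mul_nonpos_of_nonneg_of_nonpos ht0.le this
      simp [Matrix.sub_apply, Matrix.smul_apply, Matrix.one_apply, h]
      linarith
  have hCk : ∀ k : ℕ, C^k = Q * Matrix.diagonal (fun j => r j ^ k) * Q⁻¹ := by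
    intro k
    induction k with
    | zero => simp [pow_zero, Matrix.diagonal_one, hQQ]
    | succ k ih =>
      rw [pow_succ, ih, hC]
      have : Q * Matrix.diagonal (fun j => r j ^ k) * Q⁻¹ * (Q * Matrix.diagonal r * Q⁻¹)
          = Q * (Matrix.diagonal (fun j => r j ^ k) * (Q⁻¹ * Q) * Matrix.diagonal r) * Q⁻¹ := by
        noncomm_ring
      rw [this, hQ'Q, mul_one, Matrix.diagonal_mul_diagonal]
      have hfun : (fun j => r j ^ k * r j) = fun j => r j ^ (k+1) := by
        funext j; rw [pow_succ]
      rw [hfun]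
  have hCk0 : ∀ (k : ℕ) (a b : Fin (n+1)), 0 ≤ (C^k) a b := by
    intro k
    induction k with
    | zero => intro a b; simp [Matrix.one_apply]; split <;> norm_num
    | succ k ih =>
      intro a b
      rw [pow_succ, Matrix.mul_apply]
      exact Finset.sum_nonneg fun m _ => mul_nonneg (ih a m) (hC0 m b)
  -- g k = ∑ j, Q i j * r j ^ k is nonnegative
  set g : ℕ → ℝ := fun k => ∑ j, Q i j * r j ^ k with hg
  have hgeq : ∀ k, g k = (C^k).mulVec (Q.mulVec (fun _ => 1)) i := by
    intro k
    rw [Matrix.mulVec_mulVec, hCk k]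
    have : Q * Matrix.diagonal (fun j => r j ^ k) * Q⁻¹ * Q
        = Q * Matrix.diagonal (fun j => r j ^ k) := by
      rw [mul_assoc, hQ'Q, mul_one]
    rw [this]
    simp [hg, Matrix.mulVec, dotProduct, Matrix.mul_apply, Matrix.diagonal]
  have hg0 : ∀ k, 0 ≤ g k := by
    intro k
    rw [hgeq k, hcol]
    unfold Matrix.mulVec dotProduct
    apply Finset.sum_nonneg
    intro m _
    apply mul_nonneg (hCk0 k i m)
    by_cases h : m = Fin.last n
    · subst h; simp; exact Finset.sum_nonneg fun j _ => (hw j).le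
    · simp [Pi.single_apply, h]
  -- partial sums
  have hpartial : ∀ K : ℕ, ∑ k ∈ Finset.range K, g k
      = ∑ j, Q i j * ((1 - r j ^ K) / (t * x j)) := by
    intro K
    rw [hg]
    rw [Finset.sum_comm]
    apply Finset.sum_congr rfl
    intro j _
    rw [← Finset.mul_sum]
    congr 1
    have hne : r j ≠ 1 := ne_of_lt (hr1 j)
    rw [geom_sum_eq hne]
    have htxj : t * x j ≠ 0 := (mul_pos ht0 (hx0 j)).ne'
    have : r j - 1 = -(t * x j) := by simp [hr]
    rw [this, div_neg, ← neg_div, neg_sub]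
  have hlim : Tendsto (fun K => ∑ k ∈ Finset.range K, g k) atTop
      (𝓝 (∑ j, Q i j * (1 / (t * x j)))) := by
    have : ∀ K, ∑ k ∈ Finset.range K, g k = ∑ j, Q i j * ((1 - r j ^ K) / (t * x j)) :=
      hpartial
    simp_rw [this]
    apply tendsto_finset_sum
    intro j _
    have h1 : Tendsto (fun K : ℕ => r j ^ K) atTop (𝓝 0) :=
      tendsto_pow_atTop_nhds_zero_of_lt_one (hr0 j) (hr1 j)
    have h2 : Tendsto (fun K : ℕ => Q i j * ((1 - r j ^ K) / (t * x j))) atTop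
        (𝓝 (Q i j * ((1 - 0) / (t * x j)))) := by
      exact (((tendsto_const_nhds.sub h1).div_const _).const_mul _)
    simpa using h2
  have hL : 0 ≤ ∑ j, Q i j * (1 / (t * x j)) :=
    ge_of_tendsto' hlim fun K => Finset.sum_nonneg fun k _ => hg0 k
  -- conclude
  have hfinal : Q.mulVec y₀ i = (μ * t) * ∑ j, Q i j * (1 / (t * x j)) := by
    simp only [hy₀]
    unfold Matrix.mulVec dotProduct
    rw [Finset.mul_sum]
    apply Finset.sum_congr rfl
    intro j _
    have htt : t * t⁻¹ = 1 := mul_inv_cancel₀ ht0.ne'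
    calc Q i j * (μ * (x j)⁻¹) = (t * t⁻¹) * (Q i j * (μ * (x j)⁻¹)) := by
          rw [htt, one_mul]
      _ = μ * t * (Q i j * (1 / (t * x j))) := by rw [one_div, mul_inv]; ring
  rw [hfinal]
  exact mul_nonneg (mul_nonneg hμ ht0.le) hL
end

section
/- In dimension N = 3, the matrix Q = [[1, -1, 0], [1, w_2/w_1, -1 - w_2/w_1], [w_1, w_2, w_3]] satisfies the admissibility conditions: it is invertible, its last row is w^T, Q𝟙 = (w_1+w_2+w_3)e_3, and all off-diagonal entries of Q·diag(x)·Q^{-1} are nonpositive, whenever 0 < x_1 ≤ x_2 ≤ x_3 and w_1, w_2, w_3 > 0. -/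
/-!
The inverse of `Q` is explicit, with denominators built from `w₁`, `w₁ + w₂` and
`w₁ + w₂ + w₃`, so `Q · diag(x) · Q⁻¹` can be computed entry by entry. Every off-diagonal entry is a nonnegative
multiple of `x₁ - x₂` or of `w₁ (x₁ - x₃) + w₂ (x₂ - x₃)`, both of which are nonpositive
when `x₁ ≤ x₂ ≤ x₃`.
-/

open Matrix

section Field

variable {K : Type*} [Field K] (w₁ w₂ w₃ : K)

def qMatrix : Matrix (Fin 3) (Fin 3) K :=
  !![1, -1, 0; 1, w₂ / w₁, -1 - w₂ / w₁; w₁, w₂, w₃]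

def qMatrixInv : Matrix (Fin 3) (Fin 3) K :=
  !![w₂ / (w₁ + w₂), w₁ * w₃ / ((w₁ + w₂) * (w₁ + w₂ + w₃)), 1 / (w₁ + w₂ + w₃);
     -w₁ / (w₁ + w₂), w₁ * w₃ / ((w₁ + w₂) * (w₁ + w₂ + w₃)), 1 / (w₁ + w₂ + w₃);
     0, -w₁ / (w₁ + w₂ + w₃), 1 / (w₁ + w₂ + w₃)]

variable {w₁ w₂ w₃}

theorem qMatrix_mul_qMatrixInv (h₁ : w₁ ≠ 0) (h₁₂ : w₁ + w₂ ≠ 0) (h₁₂₃ : w₁ + w₂ + w₃ ≠ 0) :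
    qMatrix w₁ w₂ w₃ * qMatrixInv w₁ w₂ w₃ = 1 := by
  ext i j
  fin_cases i <;> fin_cases j <;>
    simp [qMatrix, qMatrixInv, Matrix.mul_apply, Fin.sum_univ_three] <;>
    field_simp <;> ring

theorem qMatrix_conj_diagonal (x₁ x₂ x₃ : K)
    (h₁ : w₁ ≠ 0) (h₁₂ : w₁ + w₂ ≠ 0) (h₁₂₃ : w₁ + w₂ + w₃ ≠ 0) :
    qMatrix w₁ w₂ w₃ * diagonal ![x₁, x₂, x₃] * qMatrixInv w₁ w₂ w₃ =
      !![(w₂ * x₁ + w₁ * x₂) / (w₁ + w₂),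
          w₁ * w₃ * (x₁ - x₂) / ((w₁ + w₂) * (w₁ + w₂ + w₃)),
          (x₁ - x₂) / (w₁ + w₂ + w₃);
         w₂ * (x₁ - x₂) / (w₁ + w₂),
          (w₃ * (w₁ * x₁ + w₂ * x₂) + (w₁ + w₂) ^ 2 * x₃) / ((w₁ + w₂) * (w₁ + w₂ + w₃)),
          (w₁ * (x₁ - x₃) + w₂ * (x₂ - x₃)) / (w₁ * (w₁ + w₂ + w₃));
         w₁ * w₂ * (x₁ - x₂) / (w₁ + w₂),
          w₁ * w₃ * (w₁ * (x₁ - x₃) + w₂ * (x₂ - x₃)) / ((w₁ + w₂) * (w₁ + w₂ + w₃)),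
          (w₁ * x₁ + w₂ * x₂ + w₃ * x₃) / (w₁ + w₂ + w₃)] := by
  ext i j
  fin_cases i <;> fin_cases j <;>
    simp [qMatrix, qMatrixInv, Matrix.mul_apply, vecMul_diagonal, Fin.sum_univ_three] <;>
    field_simp <;> ring

end Field

theorem qMatrix_conj_diagonal_offDiag_nonpos {K : Type*} [Field K] [LinearOrder K]
    [IsStrictOrderedRing K] {w₁ w₂ w₃ x₁ x₂ x₃ : K}
    (hw₁ : 0 < w₁) (hw₂ : 0 < w₂) (hw₃ : 0 < w₃) (hx₁₂ : x₁ ≤ x₂) (hx₂₃ : x₂ ≤ x₃)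
    {i j : Fin 3} (hij : i ≠ j) :
    (qMatrix w₁ w₂ w₃ * diagonal ![x₁, x₂, x₃] * qMatrixInv w₁ w₂ w₃) i j ≤ 0 := by
  have hd₁₂ : x₁ - x₂ ≤ 0 := by linarith
  have hd₃ : w₁ * (x₁ - x₃) + w₂ * (x₂ - x₃) ≤ 0 := by nlinarith
  rw [qMatrix_conj_diagonal x₁ x₂ x₃ hw₁.ne' (by positivity) (by positivity)]
  fin_cases i <;> fin_cases j
  all_goals first
    | exact absurd rfl hij
    | (apply div_nonpos_of_nonpos_of_nonneg _ (by positivity)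
       first
         | exact hd₁₂ | exact hd₃
         | exact mul_nonpos_of_nonneg_of_nonpos (by positivity) hd₁₂
         | exact mul_nonpos_of_nonneg_of_nonpos (by positivity) hd₃)

theorem stmt_11_general (w₁ w₂ w₃ x₁ x₂ x₃ : ℝ) (hw₁ : 0 < w₁) (hw₂ : 0 < w₂) (hw₃ : 0 < w₃)
    (hx12 : x₁ ≤ x₂) (hx23 : x₂ ≤ x₃)
    (Q : Matrix (Fin 3) (Fin 3) ℝ)
    (hQ : Q = Matrix.of ![![1, -1, 0], ![1, w₂ / w₁, -1 - w₂ / w₁], ![w₁, w₂, w₃]]) :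
    IsUnit Q ∧
      (∀ j, Q 2 j = ![w₁, w₂, w₃] j) ∧
      Q.mulVec (fun _ => (1 : ℝ)) = Pi.single (2 : Fin 3) (w₁ + w₂ + w₃) ∧
      (∀ i j : Fin 3, i ≠ j →
        (Q * Matrix.diagonal ![x₁, x₂, x₃] * Q⁻¹) i j ≤ 0) := by
  change Q = qMatrix w₁ w₂ w₃ at hQ
  subst hQ
  have hQR : qMatrix w₁ w₂ w₃ * qMatrixInv w₁ w₂ w₃ = 1 :=
    qMatrix_mul_qMatrixInv hw₁.ne' (by positivity) (by positivity)
  refine ⟨(isUnit_iff_isUnit_det _).mpr (isUnit_det_of_right_inverse hQR),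
    fun j => by fin_cases j <;> rfl, ?_, fun i j hij => ?_⟩
  · ext i
    fin_cases i <;> simp [qMatrix, mulVec, dotProduct, Fin.sum_univ_three]
  · rw [inv_eq_right_inv hQR]
    exact qMatrix_conj_diagonal_offDiag_nonpos hw₁ hw₂ hw₃ hx12 hx23 hij

/-- In dimension `N = 3`, the matrix with rows `(1,-1,0)`, `(1, w₂/w₁, -1-w₂/w₁)`,
`(w₁,w₂,w₃)` is admissible whenever `0 < x₁ ≤ x₂ ≤ x₃` and `w₁,w₂,w₃ > 0`. -/
theorem stmt_11 (w₁ w₂ w₃ x₁ x₂ x₃ : ℝ) (hw₁ : 0 < w₁) (hw₂ : 0 < w₂) (hw₃ : 0 < w₃)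
    (hx₁ : 0 < x₁) (hx12 : x₁ ≤ x₂) (hx23 : x₂ ≤ x₃)
    (Q : Matrix (Fin 3) (Fin 3) ℝ)
    (hQ : Q = Matrix.of ![![1, -1, 0], ![1, w₂ / w₁, -1 - w₂ / w₁], ![w₁, w₂, w₃]]) :
    IsUnit Q ∧
      (∀ j, Q 2 j = ![w₁, w₂, w₃] j) ∧
      Q.mulVec (fun _ => (1 : ℝ)) = Pi.single (2 : Fin 3) (w₁ + w₂ + w₃) ∧
      (∀ i j : Fin 3, i ≠ j →
        (Q * Matrix.diagonal ![x₁, x₂, x₃] * Q⁻¹) i j ≤ 0) :=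
  stmt_11_general w₁ w₂ w₃ x₁ x₂ x₃ hw₁ hw₂ hw₃ hx12 hx23 Q hQ
end

section
/- Let Q be admissible, z ∈ ℝ_+^N with z_i = 0 for some index i, and define the drift b(z) = -Q·diag(x)·Q^{-1} z + (θ + μ - λ z_N)·(∑w_j)·e_N with θ, μ ≥ 0 and λ ∈ ℝ arbitrary. Then the i-th component b_i(z) ≥ 0; that is, the drift of the transformed ODE is inward-pointing on the boundary of the orthant. -/
/-- For an admissible `Q`, the drift `b(z) = -Q diag(x) Q⁻¹ z + (θ+μ-λz_N)(∑wⱼ)e_N`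
of the transformed ODE is inward-pointing on the boundary of the orthant:
if `z ∈ ℝ₊^N` and `z_i = 0`, then `b_i(z) ≥ 0`. -/
theorem stmt_16 (n : ℕ) (w x : Fin (n + 1) → ℝ)
    (hw : ∀ i, 0 < w i) (hx0 : ∀ i, 0 < x i) (hxmono : Monotone x)
    (Q : Matrix (Fin (n + 1)) (Fin (n + 1)) ℝ)
    (hQinv : IsUnit Q)
    (hrow : ∀ j, Q (Fin.last n) j = w j)
    (hcol : Q.mulVec (fun _ => (1 : ℝ)) = Pi.single (Fin.last n) (∑ j, w j))
    (hoff : ∀ i j : Fin (n + 1), i ≠ j → (Q * Matrix.diagonal x * Q⁻¹) i j ≤ 0)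
    (θ μ lam : ℝ) (hθ : 0 ≤ θ) (hμ : 0 ≤ μ)
    (z : Fin (n + 1) → ℝ) (hz : ∀ j, 0 ≤ z j)
    (i : Fin (n + 1)) (hzi : z i = 0) :
    0 ≤ -((Q * Matrix.diagonal x * Q⁻¹).mulVec z i) +
        (θ + μ - lam * z (Fin.last n)) * (∑ j, w j) *
          (if i = Fin.last n then 1 else 0) := by
  have h1 : (Q * Matrix.diagonal x * Q⁻¹).mulVec z i ≤ 0 := by
    rw [Matrix.mulVec]
    apply Finset.sum_nonpos
    intro j _
    rcases eq_or_ne i j with h | h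
    · simp [← h, hzi, dotProduct]
    · exact mul_nonpos_of_nonpos_of_nonneg (hoff i j h) (hz j)
  have h2 : 0 ≤ (θ + μ - lam * z (Fin.last n)) * (∑ j, w j) *
      (if i = Fin.last n then 1 else 0) := by
    split_ifs with h
    · rw [← h, hzi]
      simp only [mul_zero, sub_zero, mul_one]
      exact mul_nonneg (by linarith) (Finset.sum_nonneg fun j _ => (hw j).le)
    · simp
  linarith
end
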